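/- arXiv:1909.01510 — 2 statements merged into one kernel-verified Lean document; each statement's English description precedes it below -/
import Mathlib

section
/- Let j ≥ 0 be an integer, ρ ∈ {0,1}, and let m1, m3 be integers with |m1| ≤ j, |m3| ≤ j and m1 ≡ m3 ≡ ρ (mod 2). Then for every z ∈ ℂ with 2z ∉ ℤ, Σ_{m2} S^j_{m1,m2}(z) · S^j_{m2,m3}(1−z) = π · (Γ(z−1/2)·Γ(1/2−z) / (Γ(z)·Γ(1−z))) · [m1 = m3], where the sum runs over all integers m2 with |m2| ≤ j and m2 ≡ ρ (mod 2), and [m1 = m3] equals 1 if m1 = m3 and 0 otherwise. -/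
/-!
Write `S(z) = M D(z) N` with `D(z) = diag((-1)^k Q(z,k))`. With `E = diag((-1)^m)`, the sum over
`m₂ ≡ ρ` is the `(m₁, m₃)` entry of `S(z) P S(1-z)`, where `P = (1 + (-1)^ρ E) / 2`.

Up to diagonal factors, `M` and `N` are both the matrix of the substitution
`X ↦ Y - X/2, Y ↦ Y + X/2` on binary forms of degree `2j`; this is what the values
`P^{(α,β)}_n(0)` of the Jacobi polynomials compute. Composing substitutions gives `M N = 1` and
shows that `N E M` is supported on the antidiagonal `k' = -k`. By the reflection formula,
`Q(z,k) Q(1-z,k)` does not depend on `k`, and `Q(1-z,-k) = Q(1-z,k)`. So for `X = 1` and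
`X = N E M` we get `D(z) X D(1-z) = c X` with `c = Q(z,0) Q(1-z,0)`, and therefore
`S(z) P S(1-z) = c M (N P M) N = c P`. Legendre's duplication formula gives
`Q(z,0) = √π Γ(z-1/2) / Γ(z)`, and this identifies `c`.
-/
namespace Stmt3

noncomputable section

/-- Pochhammer symbol `(a)^{(k)} = a(a+1)⋯(a+k−1)` with natural exponent. -/
def pochN (a : ℂ) (k : ℕ) : ℂ := ∏ i ∈ Finset.range k, (a + i)

/-- Pochhammer symbol with complex exponent, `(a)^{(w)} = Γ(a+w)/Γ(a)`. -/
def pochC (a w : ℂ) : ℂ := Complex.Gamma (a + w) / Complex.Gamma a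

/-- Generalized binomial coefficient `C(w,k) = w(w−1)⋯(w−k+1)/k!`. -/
def genBinom (w : ℂ) (k : ℕ) : ℂ := (∏ i ∈ Finset.range k, (w - i)) / (Nat.factorial k : ℂ)

/-- Jacobi polynomial `P^{(α,β)}_n(x)`. -/
def jacobiP (n : ℕ) (α β x : ℂ) : ℂ :=
  ∑ s ∈ Finset.range (n + 1),
    genBinom ((n : ℂ) + α) (n - s) * genBinom ((n : ℂ) + β) s *
      ((x - 1) / 2) ^ s * ((x + 1) / 2) ^ (n - s)

/-- `c^j_m = √((j+m)!(j−m)!)`. -/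
def cc (j : ℕ) (m : ℤ) : ℂ :=
  (Real.sqrt ((Nat.factorial ((j : ℤ) + m).toNat) * (Nat.factorial ((j : ℤ) - m).toNat)) : ℝ)

/-- Truncation index of a terminating hypergeometric series:
`min {k : ℕ | −k is among the numerator parameters}`. -/
def truncN (as : List ℂ) : ℕ := sInf {k : ℕ | (-(k : ℂ)) ∈ as}

/-- Terminating hypergeometric sum `ₚF_q(as; bs; x) = Σ_{k=0}^{N} (as)ₖ/(bs)ₖ · xᵏ/k!`,
where `N` is the smallest `k` such that `−k` is a numerator parameter. -/
def pFq (as bs : List ℂ) (x : ℂ) : ℂ :=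
  ∑ k ∈ Finset.range (truncN as + 1),
    ((as.map fun a => pochN a k).prod / (bs.map fun b => pochN b k).prod) * x ^ k /
      (Nat.factorial k : ℂ)

/-- `Q(z,m) = π·2^{2−2z}·Γ(2z−1)/(Γ(z+m)·Γ(z−m))`. -/
def Qf (z m : ℂ) : ℂ :=
  (Real.pi : ℂ) * (2 : ℂ) ^ ((2 : ℂ) - 2 * z) * Complex.Gamma (2 * z - 1) /
    (Complex.Gamma (z + m) * Complex.Gamma (z - m))

/-- Change-of-basis matrix entry `M^j_{m,m'}`. -/
def Mmat (j : ℕ) (m m' : ℤ) : ℂ :=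
  (cc j m' / cc j m) * Complex.I ^ (m' - m) * (2 : ℂ) ^ (-m') *
    jacobiP ((j : ℤ) - m').toNat ((m' : ℂ) - m) ((m' : ℂ) + m) 0

/-- Change-of-basis matrix entry `N^j_{m,m'}`. -/
def Nmat (j : ℕ) (m m' : ℤ) : ℂ :=
  (cc j m' / cc j m) * Complex.I ^ (m - m') * (2 : ℂ) ^ (-m') *
    jacobiP ((j : ℤ) - m').toNat ((m' : ℂ) - m) ((m' : ℂ) + m) 0

/-- Intertwining-operator matrix entry `S^j_{m,m'}(z) = Σ_k (−1)^k M^j_{m,k} N^j_{k,m'} Q(z,k)`. -/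
def Smat (j : ℕ) (m m' : ℤ) (z : ℂ) : ℂ :=
  ∑ k ∈ Finset.Icc (-(j : ℤ)) (j : ℤ), (-1 : ℂ) ^ k * Mmat j m k * Nmat j k m' * Qf z (k : ℂ)

open Polynomial Finset
open Matrix (diagonal of of_apply mul_apply mul_diagonal diagonal_mul diagonal_mul_diagonal
  diagonal_apply diagonal_one)

section LinSubst

variable {R : Type*} [CommRing R]

/-- The image of `X ^ p * Y ^ q` under `X ↦ a X + b Y, Y ↦ c X + d Y`, dehomogenised at `Y = 1`.
Its coefficients are the matrix entries of `[[a, b], [c, d]]` acting on binary forms of degree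
`p + q`, so they multiply like these matrices (`sum_pow_mul_coeff_linSubst_mul_coeff`). -/
def linSubst (a b c d : R) (p q : ℕ) : R[X] := (C a * X + C b) ^ p * (C c * X + C d) ^ q

lemma linSubst_comm (a b c d : R) (p q : ℕ) :
    linSubst a b c d p q = linSubst c d a b q p :=
  mul_comm _ _

lemma coeff_C_mul_X_add_C_pow (a b : R) (n k : ℕ) :
    ((C a * X + C b) ^ n).coeff k = a ^ k * b ^ (n - k) * n.choose k := by
  have h : (C a * X + C b) ^ n =
      ∑ i ∈ range (n + 1), C (a ^ i * b ^ (n - i) * n.choose i) * X ^ i := by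
    rw [add_pow]
    refine sum_congr rfl fun i _ => ?_
    simp only [mul_pow, ← C_pow, map_mul, map_natCast]
    ring
  rw [h, finsetSum_coeff, sum_eq_single k]
  · rw [coeff_C_mul_X_pow, if_pos rfl]
  · intro i _ hik
    rw [coeff_C_mul_X_pow, if_neg (Ne.symm hik)]
  · intro hk
    simp [Nat.choose_eq_zero_of_lt (by simpa using hk : n < k)]

lemma natDegree_C_mul_X_add_C_pow_le (a b : R) (p : ℕ) :
    ((C a * X + C b) ^ p).natDegree ≤ p := by
  simpa using natDegree_pow_le_of_le p (natDegree_linear_le (a := a) (b := b))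

lemma homogenize_C_mul_X_add_C_pow (a b : R) (p : ℕ) :
    ((C a * X + C b) ^ p).homogenize p =
      (MvPolynomial.C a * .X 0 + MvPolynomial.C b * .X 1) ^ p := by
  induction p with
  | zero => simp
  | succ p ih =>
    rw [pow_succ, homogenize_mul _ _ (natDegree_C_mul_X_add_C_pow_le a b p) natDegree_linear_le, ih]
    simp [pow_succ]

lemma sum_coeff_linSubst_smul {A : Type*} [CommRing A] [Algebra R A] (a b c d : R) (p q : ℕ)
    (u v : A) :
    ∑ rs ∈ antidiagonal (p + q), (linSubst a b c d p q).coeff rs.1 • (u ^ rs.1 * v ^ rs.2) =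
      (a • u + b • v) ^ p * (c • u + d • v) ^ q := by
  have h := congrArg (MvPolynomial.aeval ![u, v]) (homogenize_mul _ _
    (natDegree_C_mul_X_add_C_pow_le a b p) (natDegree_C_mul_X_add_C_pow_le c d q))
  rw [homogenize_C_mul_X_add_C_pow, homogenize_C_mul_X_add_C_pow] at h
  simp only [map_pow, map_add, map_mul, MvPolynomial.aeval_C, MvPolynomial.aeval_X,
    Matrix.cons_val_zero, Matrix.cons_val_one] at h
  simp only [Algebra.smul_def]
  rw [← h, ← linSubst]
  simp [homogenize, MvPolynomial.aeval_monomial, Finsupp.prod_fintype]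

lemma sum_pow_mul_coeff_linSubst_mul_coeff (a b c d α β γ δ x : R) (p q t : ℕ) :
    ∑ rs ∈ antidiagonal (p + q),
        x ^ rs.1 * (linSubst a b c d p q).coeff rs.1 * (linSubst α β γ δ rs.1 rs.2).coeff t =
      (linSubst (a * x * α + b * γ) (a * x * β + b * δ) (c * x * α + d * γ)
        (c * x * β + d * δ) p q).coeff t := by
  have h := congrArg (coeff · t)
    (sum_coeff_linSubst_smul a b c d p q (C x * (C α * X + C β)) (C γ * X + C δ))
  have hu : ∀ e f : R, e • (C x * (C α * X + C β)) + f • (C γ * X + C δ) =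
      C (e * x * α + f * γ) * X + C (e * x * β + f * δ) := by
    intro e f
    simp only [smul_eq_C_mul, map_add, map_mul]
    ring
  rw [hu, hu] at h
  simp only [finsetSum_coeff, smul_eq_C_mul, coeff_C_mul, mul_pow, ← C_pow, mul_assoc] at h
  rw [← linSubst] at h
  convert h using 1
  · exact sum_congr rfl fun rs _ => by simp only [linSubst]; ring
  · simp only [mul_assoc]

lemma coeff_linSubst_antidiag (b c : R) (p q t : ℕ) :
    (linSubst 0 b c 0 p q).coeff t = if t = q then b ^ p * c ^ q else 0 := by
  have : linSubst 0 b c 0 p q = C (b ^ p * c ^ q) * X ^ q := by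
    simp only [linSubst, map_zero, zero_mul, zero_add, add_zero, mul_pow, map_mul, map_pow]
    ring
  rw [this, coeff_C_mul_X_pow]

lemma coeff_linSubst_diag (a d : R) (p q t : ℕ) :
    (linSubst a 0 0 d p q).coeff t = if t = p then a ^ p * d ^ q else 0 := by
  rw [linSubst_comm, coeff_linSubst_antidiag, mul_comm]

end LinSubst

lemma genBinom_natCast (N k : ℕ) : genBinom N k = N.choose k := by
  rw [genBinom, ← descPochhammer_eval_eq_prod_range, descPochhammer_eval_eq_descFactorial,
    Nat.descFactorial_eq_factorial_mul_choose]
  push_cast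
  exact mul_div_cancel_left₀ _ (Nat.cast_ne_zero.2 k.factorial_ne_zero)

lemma jacobiP_zero_eq_coeff (P Q n : ℕ) :
    jacobiP n ((Q : ℂ) - n) ((P : ℂ) - n) 0 = (linSubst (-1/2) 1 (1/2) 1 P Q).coeff n := by
  rw [linSubst, coeff_mul, Nat.sum_antidiagonal_eq_sum_range_succ_mk, jacobiP]
  refine sum_congr rfl fun s _ => ?_
  simp only [add_sub_cancel, coeff_C_mul_X_add_C_pow, genBinom_natCast, one_pow]
  ring

lemma pow_toNat {G : Type*} [DivInvMonoid G] (x : G) {n : ℤ} (h : 0 ≤ n) :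
    x ^ n.toNat = x ^ n := by
  rw [← zpow_natCast, Int.toNat_of_nonneg h]

lemma natCast_toNat {n : ℤ} (h : 0 ≤ n) : ((n.toNat : ℕ) : ℂ) = n := by
  exact_mod_cast Int.toNat_of_nonneg h

lemma zpow_eq_pow_mul_inv_pow_toNat {G₀ : Type*} [GroupWithZero G₀] {y : G₀} (hy : y ≠ 0)
    {l : ℤ} {j : ℕ} (h : l ≤ j) : y ^ l = y ^ j * y⁻¹ ^ ((j : ℤ) - l).toNat := by
  rw [inv_pow, pow_toNat _ (by omega), ← zpow_natCast, ← div_eq_mul_inv, ← zpow_sub₀ hy,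
    sub_sub_cancel]

lemma neg_half_pow_mul_two_pow_mul_neg_one_pow {j p q : ℕ} (h : p + q = 2 * j) :
    (-(1/2) : ℂ) ^ j * (2 ^ p * (-1) ^ q) = (-2) ^ p / (-2) ^ j := by
  have hq : (-1 : ℂ) ^ q = (-1) ^ p := by
    rw [neg_one_pow_eq_pow_mod_two, show q % 2 = p % 2 by omega, ← neg_one_pow_eq_pow_mod_two]
  rw [eq_div_iff (pow_ne_zero _ (by norm_num)), hq, mul_comm, ← mul_assoc, ← mul_pow,
    show (-2 : ℂ) * (-(1/2)) = 1 by norm_num, one_pow, one_mul, ← mul_pow]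
  norm_num

lemma sum_Icc_eq_sum_antidiagonal {M : Type*} [AddCommMonoid M] (j : ℕ) (F : ℕ → ℕ → M) :
    ∑ l ∈ Icc (-(j : ℤ)) j, F ((j : ℤ) - l).toNat ((j : ℤ) + l).toNat =
      ∑ rs ∈ antidiagonal (2 * j), F rs.1 rs.2 := by
  refine sum_nbij' (fun l => (((j : ℤ) - l).toNat, ((j : ℤ) + l).toNat)) (fun rs => rs.2 - j)
    ?_ ?_ ?_ ?_ ?_
  · intro l hl
    simp only [mem_Icc, HasAntidiagonal.mem_antidiagonal] at hl ⊢
    omega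
  · rintro ⟨r, s⟩ hrs
    simp only [mem_Icc, HasAntidiagonal.mem_antidiagonal] at hrs ⊢
    omega
  · intro l hl
    simp only [mem_Icc] at hl
    omega
  · rintro ⟨r, s⟩ hrs
    simp only [HasAntidiagonal.mem_antidiagonal] at hrs
    ext <;> simp only <;> omega
  · intro l _
    rfl

lemma cc_ne_zero (j : ℕ) (m : ℤ) : cc j m ≠ 0 := by
  rw [cc, Ne, Complex.ofReal_eq_zero, Real.sqrt_eq_zero']
  push Not
  positivity

abbrev Idx (j : ℕ) : Type := Icc (-(j : ℤ)) j

section Matrices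

variable {j : ℕ}

lemma Idx.le (l : Idx j) : (l : ℤ) ≤ j := (mem_Icc.1 l.2).2

lemma Idx.neg_le (l : Idx j) : -(j : ℤ) ≤ l := (mem_Icc.1 l.2).1

lemma sum_idx_eq_sum_antidiagonal {M : Type*} [AddCommMonoid M] (F : ℕ → ℕ → M) :
    ∑ l : Idx j, F ((j : ℤ) - l).toNat ((j : ℤ) + l).toNat =
      ∑ rs ∈ antidiagonal (2 * j), F rs.1 rs.2 :=
  (sum_coe_sort _ fun l : ℤ => F ((j : ℤ) - l).toNat ((j : ℤ) + l).toNat).trans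
    (sum_Icc_eq_sum_antidiagonal j F)

/-- The substitution `X ↦ Y - X/2, Y ↦ Y + X/2` on binary forms of degree `2j`, with rows indexed
by `X ^ (j + a) * Y ^ (j - a)` and columns by `X ^ (j - l) * Y ^ (j + l)`. -/
def substMat (j : ℕ) : Matrix (Idx j) (Idx j) ℂ :=
  of fun a l => (linSubst (-1/2) 1 (1/2) 1 ((j : ℤ) + a).toNat ((j : ℤ) - a).toNat).coeff
    ((j : ℤ) - l).toNat

lemma jacobiP_zero_eq_substMat (a l : Idx j) :
    jacobiP ((j : ℤ) - l).toNat ((l : ℂ) - a) ((l : ℂ) + a) 0 = substMat j a l := by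
  rw [substMat, of_apply, ← jacobiP_zero_eq_coeff]
  have := a.le; have := a.neg_le; have := l.le
  congr 1 <;> rw [natCast_toNat (by omega), natCast_toNat (by omega)] <;> push_cast <;> ring

lemma substMat_mul_diagonal_mul_substMat_apply {y : ℂ} (hy : y ≠ 0) (a b : Idx j) :
    (substMat j * diagonal (fun l : Idx j => y ^ (l : ℤ)) * substMat j) a b =
      y ^ j * (linSubst (-y⁻¹ / 4 - 1 / 2) (1 - y⁻¹ / 2) (y⁻¹ / 4 - 1 / 2) (y⁻¹ / 2 + 1)
        ((j : ℤ) + a).toNat ((j : ℤ) - a).toNat).coeff ((j : ℤ) - b).toNat := by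
  set p := ((j : ℤ) + a).toNat
  set q := ((j : ℤ) - a).toNat
  set t := ((j : ℤ) - b).toNat
  have hpq : p + q = 2 * j := by have := a.le; have := a.neg_le; omega
  calc (substMat j * diagonal (fun l : Idx j => y ^ (l : ℤ)) * substMat j) a b
      = ∑ l : Idx j, y ^ j * (y⁻¹ ^ ((j : ℤ) - l).toNat *
          (linSubst (-1/2) 1 (1/2) 1 p q).coeff ((j : ℤ) - l).toNat *
          (linSubst (1/2) 1 (-1/2) 1 ((j : ℤ) - l).toNat ((j : ℤ) + l).toNat).coeff t) := by
        rw [mul_apply]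
        refine sum_congr rfl fun l _ => ?_
        rw [mul_diagonal, substMat, of_apply, of_apply,
          linSubst_comm (-1/2 : ℂ) 1 (1/2) 1 ((j : ℤ) + l).toNat,
          zpow_eq_pow_mul_inv_pow_toNat hy l.le]
        ring
    _ = y ^ j * ∑ rs ∈ antidiagonal (p + q), y⁻¹ ^ rs.1 *
          (linSubst (-1/2) 1 (1/2) 1 p q).coeff rs.1 *
          (linSubst (1/2) 1 (-1/2) 1 rs.1 rs.2).coeff t := by
        rw [sum_idx_eq_sum_antidiagonal (fun r s => y ^ j * (y⁻¹ ^ r *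
          (linSubst (-1/2) 1 (1/2) 1 p q).coeff r * (linSubst (1/2) 1 (-1/2) 1 r s).coeff t)),
          ← mul_sum, hpq]
    _ = _ := by
        rw [sum_pow_mul_coeff_linSubst_mul_coeff]
        congr 3 <;> ring

lemma substMat_mul_diagonal_mul_substMat_neg_half :
    substMat j * diagonal (fun l : Idx j => (-1/2 : ℂ) ^ (l : ℤ)) * substMat j =
      diagonal (fun a : Idx j => (-2 : ℂ) ^ (a : ℤ)) := by
  ext a b
  rw [substMat_mul_diagonal_mul_substMat_apply (by norm_num), diagonal_apply]
  norm_num only [coeff_linSubst_antidiag]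
  have := a.le; have := a.neg_le; have := b.le; have := b.neg_le
  by_cases hab : a = b
  · subst hab
    rw [if_pos rfl, if_pos rfl, neg_half_pow_mul_two_pow_mul_neg_one_pow (by omega),
      ← zpow_natCast, ← zpow_natCast, ← zpow_sub₀ (by norm_num),
      Int.toNat_of_nonneg (by omega)]
    congr 1
    ring
  · have hab' : (a : ℤ) ≠ b := fun h => hab (Subtype.ext h)
    rw [if_neg (by omega), if_neg hab, mul_zero]

lemma substMat_mul_diagonal_mul_substMat_half_apply {a b : Idx j} (h : (b : ℤ) ≠ -a) :
    (substMat j * diagonal (fun l : Idx j => (1/2 : ℂ) ^ (l : ℤ)) * substMat j) a b = 0 := by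
  rw [substMat_mul_diagonal_mul_substMat_apply (by norm_num)]
  norm_num only [coeff_linSubst_diag]
  have := a.le; have := a.neg_le; have := b.le; have := b.neg_le
  rw [if_neg (by omega), mul_zero]

def mMat (j : ℕ) : Matrix (Idx j) (Idx j) ℂ := of fun m k => Mmat j m k

def nMat (j : ℕ) : Matrix (Idx j) (Idx j) ℂ := of fun k m => Nmat j k m

lemma mMat_eq :
    mMat j = diagonal (fun m : Idx j => Complex.I ^ (-(m : ℤ)) / cc j m) * substMat j *
      diagonal (fun k : Idx j => cc j k * Complex.I ^ (k : ℤ) * 2 ^ (-(k : ℤ))) := by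
  ext m k
  rw [mul_diagonal, diagonal_mul, mMat, of_apply, Mmat, jacobiP_zero_eq_substMat,
    zpow_sub₀ Complex.I_ne_zero]
  simp only [zpow_neg, div_eq_mul_inv]
  ring

lemma nMat_eq :
    nMat j = diagonal (fun k : Idx j => Complex.I ^ (k : ℤ) / cc j k) * substMat j *
      diagonal (fun m : Idx j => cc j m * Complex.I ^ (-(m : ℤ)) * 2 ^ (-(m : ℤ))) := by
  ext k m
  rw [mul_diagonal, diagonal_mul, nMat, of_apply, Nmat, jacobiP_zero_eq_substMat,
    zpow_sub₀ Complex.I_ne_zero]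
  simp only [zpow_neg, div_eq_mul_inv]
  ring

lemma mMat_mul_nMat : mMat j * nMat j = 1 := by
  have hmid : diagonal (fun k : Idx j => cc j k * Complex.I ^ (k : ℤ) * 2 ^ (-(k : ℤ))) *
      diagonal (fun k : Idx j => Complex.I ^ (k : ℤ) / cc j k) =
        diagonal (fun k : Idx j => (-1/2 : ℂ) ^ (k : ℤ)) := by
    rw [diagonal_mul_diagonal]
    congr 1
    funext k
    have := cc_ne_zero j k
    rw [div_eq_mul_inv (-1 : ℂ), mul_zpow, ← Complex.I_mul_I, mul_zpow, inv_zpow', zpow_neg]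
    field_simp
  rw [mMat_eq, nMat_eq]
  calc _ = diagonal (fun m : Idx j => Complex.I ^ (-(m : ℤ)) / cc j m) *
        (substMat j * diagonal (fun k : Idx j => (-1/2 : ℂ) ^ (k : ℤ)) * substMat j) *
        diagonal (fun m : Idx j => cc j m * Complex.I ^ (-(m : ℤ)) * 2 ^ (-(m : ℤ))) := by
        rw [← hmid]; simp only [Matrix.mul_assoc]
    _ = 1 := by
        rw [substMat_mul_diagonal_mul_substMat_neg_half, diagonal_mul_diagonal,
          diagonal_mul_diagonal, ← diagonal_one]
        congr 1
        funext m
        have := cc_ne_zero j m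
        rw [show (-2 : ℂ) = Complex.I * Complex.I * 2 by rw [Complex.I_mul_I]; norm_num,
          mul_zpow, mul_zpow]
        simp only [zpow_neg]
        field_simp

def signMat (j : ℕ) : Matrix (Idx j) (Idx j) ℂ := diagonal fun m => (-1) ^ (m : ℤ)

lemma nMat_mul_signMat_mul_mMat_apply {a b : Idx j} (h : (b : ℤ) ≠ -a) :
    (nMat j * signMat j * mMat j) a b = 0 := by
  have hmid : diagonal (fun m : Idx j => cc j m * Complex.I ^ (-(m : ℤ)) * 2 ^ (-(m : ℤ))) *
      diagonal (fun m : Idx j => (-1 : ℂ) ^ (m : ℤ)) *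
      diagonal (fun m : Idx j => Complex.I ^ (-(m : ℤ)) / cc j m) =
        diagonal (fun m : Idx j => (1/2 : ℂ) ^ (m : ℤ)) := by
    rw [diagonal_mul_diagonal, diagonal_mul_diagonal]
    congr 1
    funext m
    have := cc_ne_zero j m
    rw [← Complex.I_mul_I, mul_zpow, div_zpow, one_zpow]
    simp only [zpow_neg]
    field_simp
  rw [nMat_eq, mMat_eq, signMat]
  calc _ = (diagonal (fun k : Idx j => Complex.I ^ (k : ℤ) / cc j k) *
        (substMat j * diagonal (fun m : Idx j => (1/2 : ℂ) ^ (m : ℤ)) * substMat j) *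
        diagonal (fun k : Idx j => cc j k * Complex.I ^ (k : ℤ) * 2 ^ (-(k : ℤ)))) a b := by
        rw [← hmid]; simp only [Matrix.mul_assoc]
    _ = 0 := by
        rw [mul_diagonal, diagonal_mul, substMat_mul_diagonal_mul_substMat_half_apply h,
          mul_zero, zero_mul]

end Matrices

lemma Gamma_mul_Gamma_one_sub_add_int (w : ℂ) (k : ℤ) :
    Complex.Gamma (w + k) * Complex.Gamma (1 - (w + k)) =
      (-1) ^ k * (Complex.Gamma w * Complex.Gamma (1 - w)) := by
  have hsin : Complex.sin (Real.pi * (w + k)) = (-1) ^ k * Complex.sin (Real.pi * w) := by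
    rw [mul_add, mul_comm _ (k : ℂ), ← Int.cast_negOnePow ℂ]
    exact_mod_cast Complex.sin_antiperiodic.add_int_mul_eq k
  rw [Complex.Gamma_mul_Gamma_one_sub, Complex.Gamma_mul_Gamma_one_sub, hsin, mul_comm, ← div_div,
    div_eq_mul_inv _ ((-1 : ℂ) ^ k), ← inv_zpow, inv_neg_one, mul_comm]

lemma Qf_mul_Qf_one_sub (z : ℂ) (k : ℤ) : Qf z k * Qf (1 - z) k = Qf z 0 * Qf (1 - z) 0 := by
  have h₁ := Gamma_mul_Gamma_one_sub_add_int z k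
  have h₂ := Gamma_mul_Gamma_one_sub_add_int z (-k)
  push_cast at h₂
  simp only [Qf, div_mul_div_comm, add_zero, sub_zero]
  congr 1
  calc _ = Complex.Gamma (z + k) * Complex.Gamma (1 - (z + k)) *
        (Complex.Gamma (z + -k) * Complex.Gamma (1 - (z + -k))) := by ring_nf
    _ = _ := by
        rw [h₁, h₂, zpow_neg]
        field_simp

lemma Qf_neg (w m : ℂ) : Qf w (-m) = Qf w m := by
  rw [Qf, Qf, ← sub_eq_add_neg, sub_neg_eq_add, mul_comm (Complex.Gamma (w - m))]

lemma Qf_zero (w : ℂ) :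
    Qf w 0 = (Real.sqrt Real.pi : ℂ) * Complex.Gamma (w - 1 / 2) / Complex.Gamma w := by
  have hdup := Complex.Gamma_mul_Gamma_add_half (w - 1 / 2)
  rw [sub_add_cancel, show 2 * (w - 1 / 2) = 2 * w - 1 by ring,
    show 1 - (2 * w - 1) = 2 - 2 * w by ring] at hdup
  have hπ : (Real.sqrt Real.pi : ℂ) ^ 2 = Real.pi := by
    rw [← Complex.ofReal_pow, Real.sq_sqrt Real.pi_pos.le]
  rcases eq_or_ne (Complex.Gamma w) 0 with hw | hw
  · simp [Qf, hw]
  · rw [Qf, add_zero, sub_zero, div_eq_div_iff (mul_ne_zero hw hw) hw]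
    linear_combination (-((Real.sqrt Real.pi : ℂ) * Complex.Gamma w)) * hdup -
      ((2 : ℂ) ^ (2 - 2 * w) * Complex.Gamma (2 * w - 1) * Complex.Gamma w) * hπ

lemma Qf_zero_mul_Qf_zero_one_sub (z : ℂ) :
    Qf z 0 * Qf (1 - z) 0 = (Real.pi : ℂ) *
      (Complex.Gamma (z - 1 / 2) * Complex.Gamma (1 / 2 - z) /
        (Complex.Gamma z * Complex.Gamma (1 - z))) := by
  have hπ : (Real.pi : ℂ) = Real.sqrt Real.pi * Real.sqrt Real.pi := by
    rw [← Complex.ofReal_mul, Real.mul_self_sqrt Real.pi_pos.le]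
  rw [Qf_zero, Qf_zero, show 1 - z - 1 / 2 = 1 / 2 - z by ring, hπ]
  ring

lemma ite_emod_two_eq (ρ m : ℤ) :
    (if m % 2 = ρ % 2 then 1 else 0 : ℂ) = (1 + (-1) ^ ρ * (-1) ^ m) / 2 := by
  rw [← zpow_add₀ (by norm_num), neg_one_zpow_eq_ite]
  by_cases h : m % 2 = ρ % 2
  · rw [if_pos h, if_pos (Int.even_iff.2 (by omega))]
    norm_num
  · rw [if_neg h, if_neg fun he => h (by have := Int.even_iff.1 he; omega)]
    norm_num

section Intertwiner

variable {j : ℕ}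

def qDiag (j : ℕ) (z : ℂ) : Matrix (Idx j) (Idx j) ℂ :=
  diagonal fun k => (-1) ^ (k : ℤ) * Qf z k

def sMat (j : ℕ) (z : ℂ) : Matrix (Idx j) (Idx j) ℂ := mMat j * qDiag j z * nMat j

def parityProj (j : ℕ) (ρ : ℤ) : Matrix (Idx j) (Idx j) ℂ :=
  diagonal fun m => if (m : ℤ) % 2 = ρ % 2 then 1 else 0

lemma Smat_eq_sMat_apply (z : ℂ) (m m' : Idx j) : Smat j m m' z = sMat j z m m' := by
  rw [Smat, sMat, ← sum_coe_sort, mul_apply]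
  refine sum_congr rfl fun k _ => ?_
  rw [qDiag, mul_diagonal, mMat, nMat, of_apply, of_apply]
  ring

lemma parityProj_eq (ρ : ℤ) :
    parityProj j ρ = (1 / 2 : ℂ) • (1 + (-1 : ℂ) ^ ρ • signMat j) := by
  ext a b
  rw [parityProj, signMat, diagonal_apply, Matrix.smul_apply, Matrix.add_apply, Matrix.smul_apply,
    Matrix.one_apply, diagonal_apply]
  by_cases hab : a = b
  · rw [if_pos hab, if_pos hab, if_pos hab, ite_emod_two_eq, smul_eq_mul, smul_eq_mul]
    ring
  · rw [if_neg hab, if_neg hab, if_neg hab]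
    simp

lemma qDiag_mul_qDiag_one_sub (z : ℂ) :
    qDiag j z * qDiag j (1 - z) = (Qf z 0 * Qf (1 - z) 0) • 1 := by
  rw [qDiag, qDiag, diagonal_mul_diagonal, ← diagonal_one, ← Matrix.diagonal_smul]
  congr 1
  funext k
  rw [Pi.smul_apply, smul_eq_mul, mul_one, ← Qf_mul_Qf_one_sub z k]
  calc _ = ((-1) * (-1) : ℂ) ^ (k : ℤ) * (Qf z k * Qf (1 - z) k) := by rw [mul_zpow]; ring
    _ = _ := by norm_num

lemma qDiag_mul_mul_qDiag_one_sub (z : ℂ) {A : Matrix (Idx j) (Idx j) ℂ}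
    (hA : ∀ a b : Idx j, (b : ℤ) ≠ -a → A a b = 0) :
    qDiag j z * A * qDiag j (1 - z) = (Qf z 0 * Qf (1 - z) 0) • A := by
  ext a b
  rw [qDiag, qDiag, mul_diagonal, diagonal_mul, Matrix.smul_apply, smul_eq_mul]
  by_cases hab : (b : ℤ) = -a
  · rw [hab, Int.cast_neg, Qf_neg, ← Qf_mul_Qf_one_sub z a, zpow_neg]
    field_simp
  · rw [hA a b hab]
    ring

lemma sMat_mul_parityProj_mul_sMat_one_sub (ρ : ℤ) (z : ℂ) :
    sMat j z * parityProj j ρ * sMat j (1 - z) = (Qf z 0 * Qf (1 - z) 0) • parityProj j ρ := by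
  set M := mMat j
  set N := nMat j
  set E := signMat j
  have hMN : M * N = 1 := mMat_mul_nMat
  have hNM : N * M = 1 := mul_eq_one_comm.1 hMN
  have hMXN : M * (N * E * M) * N = E := by
    simp only [← Matrix.mul_assoc, hMN, Matrix.one_mul]
    rw [Matrix.mul_assoc, hMN, Matrix.mul_one]
  have hDXD := qDiag_mul_mul_qDiag_one_sub (A := N * E * M) z fun _ _ h =>
    nMat_mul_signMat_mul_mMat_apply h
  rw [sMat, sMat, parityProj_eq]
  calc M * qDiag j z * N * ((1 / 2 : ℂ) • (1 + (-1 : ℂ) ^ ρ • E)) *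
        (M * qDiag j (1 - z) * N)
      = (1 / 2 : ℂ) • (M * (qDiag j z * (N * M) * qDiag j (1 - z)) * N +
          (-1 : ℂ) ^ ρ • (M * (qDiag j z * (N * E * M) * qDiag j (1 - z)) * N)) := by
        simp only [Matrix.mul_add, Matrix.add_mul, Matrix.mul_smul, Matrix.smul_mul,
          Matrix.mul_one, Matrix.mul_assoc]
    _ = _ := by
        rw [hNM, Matrix.mul_one, qDiag_mul_qDiag_one_sub, hDXD, Matrix.mul_smul, Matrix.smul_mul,
          Matrix.mul_one, hMN, Matrix.mul_smul, Matrix.smul_mul, hMXN]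
        module

lemma sum_filter_Smat_mul_Smat (ρ : ℤ) (z : ℂ) (a b : Idx j) :
    ∑ m ∈ (Icc (-(j : ℤ)) j).filter (fun m => m % 2 = ρ % 2),
        Smat j a m z * Smat j m b (1 - z) =
      (sMat j z * parityProj j ρ * sMat j (1 - z)) a b := by
  rw [sum_filter, ← sum_coe_sort, mul_apply]
  refine sum_congr rfl fun m _ => ?_
  rw [parityProj, mul_diagonal, Smat_eq_sMat_apply, Smat_eq_sMat_apply]
  split_ifs <;> ring

end Intertwiner

theorem stmt_3_general (j : ℕ) (ρ : ℤ) (m1 m3 : ℤ)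
    (h1 : |m1| ≤ (j : ℤ)) (h3 : |m3| ≤ (j : ℤ))
    (hp1 : m1 % 2 = ρ % 2)
    (z : ℂ) :
    ∑ m2 ∈ (Finset.Icc (-(j : ℤ)) (j : ℤ)).filter (fun m2 => m2 % 2 = ρ % 2),
        Smat j m1 m2 z * Smat j m2 m3 (1 - z) =
      (Real.pi : ℂ) *
          (Complex.Gamma (z - 1 / 2) * Complex.Gamma (1 / 2 - z) /
            (Complex.Gamma z * Complex.Gamma (1 - z))) *
        (if m1 = m3 then 1 else 0) := by
  let a : Idx j := ⟨m1, mem_Icc.2 (abs_le.1 h1)⟩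
  let b : Idx j := ⟨m3, mem_Icc.2 (abs_le.1 h3)⟩
  refine (sum_filter_Smat_mul_Smat ρ z a b).trans ?_
  rw [sMat_mul_parityProj_mul_sMat_one_sub, Matrix.smul_apply, parityProj, diagonal_apply,
    Qf_zero_mul_Qf_zero_one_sub, smul_eq_mul]
  by_cases h : m1 = m3
  · rw [if_pos (Subtype.ext h : a = b), if_pos hp1, if_pos h]
  · rw [if_neg fun hab => h (congrArg Subtype.val hab), if_neg h]

/-- Functional equation for the normalizing products of simple intertwining operator entries:
`Σ_{m2 ≡ ρ (2)} S^j_{m1,m2}(z) S^j_{m2,m3}(1−z) = π·Γ(z−1/2)Γ(1/2−z)/(Γ(z)Γ(1−z))·[m1=m3]`. -/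
theorem stmt_3 (j : ℕ) (ρ : ℤ) (hρ : ρ = 0 ∨ ρ = 1) (m1 m3 : ℤ)
    (h1 : |m1| ≤ (j : ℤ)) (h3 : |m3| ≤ (j : ℤ))
    (hp1 : m1 % 2 = ρ % 2) (hp3 : m3 % 2 = ρ % 2)
    (z : ℂ) (hz : ∀ k : ℤ, 2 * z ≠ (k : ℂ)) :
    ∑ m2 ∈ (Finset.Icc (-(j : ℤ)) (j : ℤ)).filter (fun m2 => m2 % 2 = ρ % 2),
        Smat j m1 m2 z * Smat j m2 m3 (1 - z) =
      (Real.pi : ℂ) *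
          (Complex.Gamma (z - 1 / 2) * Complex.Gamma (1 / 2 - z) /
            (Complex.Gamma z * Complex.Gamma (1 - z))) *
        (if m1 = m3 then 1 else 0) :=
  stmt_3_general j ρ m1 m3 h1 h3 hp1 z

end

end Stmt3
end

section
/- For every t ∈ ℝ, the following identity of 2×2 real matrices holds: [[1,0],[t,1]] = exp(arctan(−t) · [[0,1],[−1,0]]) · [[√(1+t²), 0],[0, 1/√(1+t²)]] · [[1, t/(1+t²)],[0,1]], where exp denotes the matrix exponential. -/
/-!
Under the regular representation of `ℂ` on `ℝ² = ℂ` (basis `1, i`), the matrix `[[0,1],[-1,0]]`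
is multiplication by `-i`. Since continuous ring homomorphisms commute with `exp`,
`exp(θ [[0,1],[-1,0]])` is the matrix of `e^{-iθ}`, i.e. the rotation by `-θ`. For `θ = arctan(-t)`
we have `cos θ = 1/√(1+t²)` and `sin θ = -t/√(1+t²)`, and the identity becomes a direct
computation with `√(1+t²)² = 1+t²`.
-/

section

attribute [local instance] Matrix.linftyOpNormedRing

open Complex in
theorem exp_smul_rotationGenerator (θ : ℝ) :
    NormedSpace.exp (θ • (!![0, 1; -1, 0] : Matrix (Fin 2) (Fin 2) ℝ)) =
      !![Real.cos θ, Real.sin θ; -Real.sin θ, Real.cos θ] := by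
  set f := Algebra.leftMulMatrix basisOneI
  have hf : Continuous f := f.toLinearMap.continuous_of_finiteDimensional
  have hθ : θ • (!![0, 1; -1, 0] : Matrix (Fin 2) (Fin 2) ℝ) = f (-θ * I) := by
    simp [f, Algebra.leftMulMatrix_complex, Matrix.smul_of, Matrix.smul_cons]
  rw [hθ]
  refine (NormedSpace.map_exp f hf _).symm.trans ?_
  rw [← Complex.exp_eq_exp_ℂ, Algebra.leftMulMatrix_complex, ← ofReal_neg, exp_mul_I]
  simp [cos_ofReal_re, sin_ofReal_re]

end

/-- **Iwasawa decomposition in `SL(2,ℝ)`.**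
For every `t ∈ ℝ`,
`[[1,0],[t,1]] = exp(arctan(−t)·[[0,1],[−1,0]]) * [[√(1+t²),0],[0,1/√(1+t²)]] * [[1,t/(1+t²)],[0,1]]`. -/
theorem stmt_13 (t : ℝ) :
    (!![1, 0; t, 1] : Matrix (Fin 2) (Fin 2) ℝ) =
      NormedSpace.exp (Real.arctan (-t) • (!![0, 1; -1, 0] : Matrix (Fin 2) (Fin 2) ℝ)) *
        !![Real.sqrt (1 + t ^ 2), 0; 0, (Real.sqrt (1 + t ^ 2))⁻¹] *
        !![1, t / (1 + t ^ 2); 0, 1] := by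
  rw [exp_smul_rotationGenerator, Real.cos_arctan, Real.sin_arctan, neg_sq, Matrix.mul_fin_two,
    Matrix.mul_fin_two]
  have hs : Real.sqrt (1 + t ^ 2) ≠ 0 := by positivity
  have hsq : Real.sqrt (1 + t ^ 2) ^ 2 = 1 + t ^ 2 := Real.sq_sqrt (by positivity)
  congr 2 <;> field_simp <;> grind
end
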